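/- Let A = (n, Σ, M, α, η) be an ℝ-weighted automaton, let F ∈ ℝ^{n̂×n}, let α̃ ∈ ℝ^{n̂} be a row vector with α = α̃ F, and let à = (n̂, Σ, M̃, α̃, F η) where M̃ : Σ → ℝ^{n̂×n̂}. Let m > 0 and δ ≥ 0 be such that ‖M(a)‖₂ ≤ m, ‖M̃(a)‖₂ ≤ m, and ‖F M(a) − M̃(a) F‖₂ ≤ δ hold for all a ∈ Σ. Then for every nonempty word w ∈ Σ*, |L_A(w) − L_Ã(w)| ≤ δ · |w| · ‖α̃‖₂ · m^{|w|−1} · ‖η‖₂ (and for the empty word L_A(ε) = L_Ã(ε)). -/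

import Mathlib

open Matrix

noncomputable section

/-- The matrix `M(w)` of a word: `M(ε) = I`, `M(a₁⋯a_k) = M(a₁)⋯M(a_k)`. -/
def wordProd {S : Type*} {Γ : Type*} [Fintype S] [DecidableEq S]
    (M : Γ → Matrix S S ℝ) (w : List Γ) : Matrix S S ℝ :=
  (w.map M).prod

/-- The language of the weighted automaton `(M, α, η)`: `L(w) = α M(w) η`. -/
def WAlang {S : Type*} {Γ : Type*} [Fintype S] [DecidableEq S]
    (M : Γ → Matrix S S ℝ) (α η : S → ℝ) (w : List Γ) : ℝ :=
  α ⬝ᵥ (wordProd M w).mulVec η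

/-- The ℓ2 operator norm (spectral norm) of a matrix: the operator norm of the
induced linear map between Euclidean spaces. -/
noncomputable def l2OpNorm {m n : ℕ} (A : Matrix (Fin m) (Fin n) ℝ) : ℝ :=
  ‖LinearMap.toContinuousLinearMap (Matrix.toEuclideanLin A)‖

/-- The Euclidean (ℓ2) norm of a vector. -/
noncomputable def euclNorm {n : ℕ} (v : Fin n → ℝ) : ℝ :=
  Real.sqrt (∑ i, v i ^ 2)

/-!
Since `α = α̃ F`, the difference of the two languages on a word `w` is
`α̃ (F M(w) − M̃(w) F) η`. The defect `F M(w) − M̃(w) F` telescopes along the word: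
`F M(a w) − M̃(a w) F = (F M(a) − M̃(a) F) M(w) + M̃(a) (F M(w) − M̃(w) F)`,
so each letter contributes at most `δ m^{|w|−1}`, and Cauchy–Schwarz finishes.
-/

open scoped Matrix.Norms.L2Operator

section WordProd

variable {S S' Γ : Type*} [Fintype S] [DecidableEq S] [Fintype S'] [DecidableEq S']

@[simp]
lemma wordProd_nil (M : Γ → Matrix S S ℝ) : wordProd M [] = 1 := rfl

@[simp]
lemma wordProd_cons (M : Γ → Matrix S S ℝ) (a : Γ) (w : List Γ) :
    wordProd M (a :: w) = M a * wordProd M w := by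
  simp [wordProd]

lemma WAlang_vecMul_sub_WAlang_mulVec (M : Γ → Matrix S S ℝ) (Mt : Γ → Matrix S' S' ℝ)
    (F : Matrix S' S ℝ) (αt : S' → ℝ) (η : S → ℝ) (w : List Γ) :
    WAlang M (αt ᵥ* F) η w - WAlang Mt αt (F *ᵥ η) w =
      αt ⬝ᵥ (F * wordProd M w - wordProd Mt w * F) *ᵥ η := by
  simp only [WAlang, Matrix.sub_mulVec, dotProduct_sub, Matrix.dotProduct_mulVec,
    Matrix.vecMul_vecMul]

lemma l2_opNorm_one_le : ‖(1 : Matrix S S ℝ)‖ ≤ 1 := by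
  rw [Matrix.cstar_norm_def, map_one]
  exact ContinuousLinearMap.norm_id_le

lemma norm_wordProd_le {M : Γ → Matrix S S ℝ} {m : ℝ} (hM : ∀ a, ‖M a‖ ≤ m) (w : List Γ) :
    ‖wordProd M w‖ ≤ m ^ w.length := by
  induction w with
  | nil => simpa using l2_opNorm_one_le
  | cons a w ih =>
    have hm : 0 ≤ m := (norm_nonneg _).trans (hM a)
    calc ‖wordProd M (a :: w)‖ ≤ ‖M a‖ * ‖wordProd M w‖ := by
          simpa using Matrix.l2_opNorm_mul (M a) (wordProd M w)
      _ ≤ m * m ^ w.length := mul_le_mul (hM a) ih (norm_nonneg _) hm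
      _ = m ^ (a :: w).length := by rw [List.length_cons, pow_succ']

-- Stated for `a :: w` so that the exponent is `|w|` rather than the truncated `|a w| - 1`.
lemma norm_intertwining_defect_wordProd_cons_le {M : Γ → Matrix S S ℝ}
    {Mt : Γ → Matrix S' S' ℝ} {F : Matrix S' S ℝ} {m δ : ℝ}
    (hM : ∀ a, ‖M a‖ ≤ m) (hMt : ∀ a, ‖Mt a‖ ≤ m) (hF : ∀ a, ‖F * M a - Mt a * F‖ ≤ δ)
    (a : Γ) (w : List Γ) :
    ‖F * wordProd M (a :: w) - wordProd Mt (a :: w) * F‖ ≤ δ * (w.length + 1) * m ^ w.length := by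
  induction w generalizing a with
  | nil => simpa using hF a
  | cons b w ih =>
    have hm : 0 ≤ m := (norm_nonneg _).trans (hM a)
    have hδ : 0 ≤ δ := (norm_nonneg _).trans (hF a)
    have hsplit : F * wordProd M (a :: b :: w) - wordProd Mt (a :: b :: w) * F =
        (F * M a - Mt a * F) * wordProd M (b :: w) +
          Mt a * (F * wordProd M (b :: w) - wordProd Mt (b :: w) * F) := by
      simp only [wordProd_cons, Matrix.sub_mul, Matrix.mul_sub, Matrix.mul_assoc]
      abel
    have hhead : ‖(F * M a - Mt a * F) * wordProd M (b :: w)‖ ≤ δ * m ^ (w.length + 1) :=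
      (Matrix.l2_opNorm_mul _ _).trans
        (mul_le_mul (hF a) (norm_wordProd_le hM _) (norm_nonneg _) hδ)
    have htail : ‖Mt a * (F * wordProd M (b :: w) - wordProd Mt (b :: w) * F)‖ ≤
        m * (δ * (w.length + 1) * m ^ w.length) :=
      (Matrix.l2_opNorm_mul _ _).trans (mul_le_mul (hMt a) (ih b) (norm_nonneg _) hm)
    calc _ ≤ δ * m ^ (w.length + 1) + m * (δ * (w.length + 1) * m ^ w.length) := by
          rw [hsplit]; exact (norm_add_le _ _).trans (add_le_add hhead htail)
      _ = δ * ((b :: w).length + 1) * m ^ (b :: w).length := by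
          simp only [List.length_cons]; push_cast; ring

end WordProd

lemma l2OpNorm_eq_norm {k n : ℕ} (A : Matrix (Fin k) (Fin n) ℝ) : l2OpNorm A = ‖A‖ := rfl

lemma euclNorm_eq_norm {n : ℕ} (v : Fin n → ℝ) : euclNorm v = ‖WithLp.toLp 2 v‖ := by
  simp [euclNorm, EuclideanSpace.norm_eq]

lemma abs_dotProduct_mulVec_le {k n : ℕ} (x : Fin k → ℝ) (A : Matrix (Fin k) (Fin n) ℝ)
    (y : Fin n → ℝ) : |x ⬝ᵥ A *ᵥ y| ≤ euclNorm x * l2OpNorm A * euclNorm y := by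
  have hinner : x ⬝ᵥ A *ᵥ y = inner ℝ (WithLp.toLp 2 x) (WithLp.toLp 2 (A *ᵥ y)) := by
    simp [PiLp.inner_apply, dotProduct, mul_comm]
  rw [hinner, euclNorm_eq_norm, euclNorm_eq_norm, l2OpNorm_eq_norm, mul_assoc]
  exact (abs_real_inner_le_norm _ _).trans
    (mul_le_mul_of_nonneg_left (A.l2_opNorm_mulVec (WithLp.toLp 2 y)) (norm_nonneg _))

theorem language_error_bound_general {Γ : Type*} {n nh : ℕ}
    (M : Γ → Matrix (Fin n) (Fin n) ℝ) (α η : Fin n → ℝ)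
    (Mt : Γ → Matrix (Fin nh) (Fin nh) ℝ) (F : Matrix (Fin nh) (Fin n) ℝ)
    (αt : Fin nh → ℝ)
    (hα : α = Matrix.vecMul αt F)
    (m δ : ℝ)
    (hM : ∀ a, l2OpNorm (M a) ≤ m)
    (hMt : ∀ a, l2OpNorm (Mt a) ≤ m)
    (hF : ∀ a, l2OpNorm (F * M a - Mt a * F) ≤ δ) :
    (∀ w : List Γ, w ≠ [] →
      |WAlang M α η w - WAlang Mt αt (F.mulVec η) w| ≤
        δ * w.length * euclNorm αt * m ^ (w.length - 1) * euclNorm η) ∧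
    WAlang M α η ([] : List Γ) = WAlang Mt αt (F.mulVec η) ([] : List Γ) := by
  subst hα
  refine ⟨fun w hw => ?_, ?_⟩
  · obtain ⟨a, w, rfl⟩ := List.exists_cons_of_ne_nil hw
    have hdefect := norm_intertwining_defect_wordProd_cons_le hM hMt hF a w
    rw [WAlang_vecMul_sub_WAlang_mulVec]
    refine (abs_dotProduct_mulVec_le _ _ _).trans ?_
    rw [l2OpNorm_eq_norm, List.length_cons, Nat.add_sub_cancel]
    calc _ ≤ euclNorm αt * (δ * (w.length + 1) * m ^ w.length) * euclNorm η := by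
          gcongr
          · exact Real.sqrt_nonneg _
          · exact Real.sqrt_nonneg _
      _ = _ := by push_cast; ring
  · rw [← sub_eq_zero, WAlang_vecMul_sub_WAlang_mulVec]
    simp

/-- if `α = α̃ F`, `‖M(a)‖₂ ≤ m`, `‖M̃(a)‖₂ ≤ m` and
`‖F M(a) − M̃(a) F‖₂ ≤ δ` for all letters `a`, then for `Ã = (M̃, α̃, F η)`
and every nonempty word `w`,
`|L_A(w) − L_Ã(w)| ≤ δ |w| ‖α̃‖₂ m^{|w|−1} ‖η‖₂`
(and the languages agree on the empty word). -/
theorem language_error_bound {Γ : Type*} {n nh : ℕ}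
    (M : Γ → Matrix (Fin n) (Fin n) ℝ) (α η : Fin n → ℝ)
    (Mt : Γ → Matrix (Fin nh) (Fin nh) ℝ) (F : Matrix (Fin nh) (Fin n) ℝ)
    (αt : Fin nh → ℝ)
    (hα : α = Matrix.vecMul αt F)
    (m δ : ℝ) (hm : 0 < m) (hδ : 0 ≤ δ)
    (hM : ∀ a, l2OpNorm (M a) ≤ m)
    (hMt : ∀ a, l2OpNorm (Mt a) ≤ m)
    (hF : ∀ a, l2OpNorm (F * M a - Mt a * F) ≤ δ) :
    (∀ w : List Γ, w ≠ [] →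
      |WAlang M α η w - WAlang Mt αt (F.mulVec η) w| ≤
        δ * w.length * euclNorm αt * m ^ (w.length - 1) * euclNorm η) ∧
    WAlang M α η ([] : List Γ) = WAlang Mt αt (F.mulVec η) ([] : List Γ) :=
  language_error_bound_general M α η Mt F αt hα m δ hM hMt hF
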